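/- Let X, Y, Z, M₁₂, M₂₃, M₃₁ be finite-valued random variables satisfying: (i) H(X | M₁₂, M₃₁) = 0, H(Y | M₁₂, M₂₃) = 0, H(Z | M₂₃, M₃₁) = 0; (ii) I(M₁₂, M₃₁ ; Y, Z | X) = 0 (privacy against Alice); and (iii) I(M₂₃, M₃₁ ; X, Y | Z) = 0 (privacy against Charlie). Then H(M₂₃) ≥ RI(X; Z) + H(Y, Z | X), where RI(X;Z) denotes the residual information, defined as the infimum over all pairs of functions (f,g) with f(X) = g(Z) almost surely of I(X; Z | f(X)). -/

import Mathlib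

open scoped BigOperators

noncomputable section

/-- Probability that the random variable `X` takes the value `a`,
with respect to the probability mass function `p` on the finite sample space `Ω`. -/
def prob {Ω : Type*} [Fintype Ω] {α : Type*} [DecidableEq α]
    (p : Ω → ℝ) (X : Ω → α) (a : α) : ℝ :=
  ∑ ω, if X ω = a then p ω else 0

/-- Shannon entropy (base 2) of the random variable `X`. -/
def ent {Ω : Type*} [Fintype Ω] {α : Type*} [Fintype α] [DecidableEq α]
    (p : Ω → ℝ) (X : Ω → α) : ℝ :=
  -∑ a, prob p X a * Real.logb 2 (prob p X a)

/-- Conditional entropy `H(X|Y)`. -/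
def condEnt {Ω : Type*} [Fintype Ω] {α β : Type*} [Fintype α] [DecidableEq α]
    [Fintype β] [DecidableEq β] (p : Ω → ℝ) (X : Ω → α) (Y : Ω → β) : ℝ :=
  ent p (fun ω => (X ω, Y ω)) - ent p Y

/-- Mutual information `I(X;Y)`. -/
def mi {Ω : Type*} [Fintype Ω] {α β : Type*} [Fintype α] [DecidableEq α]
    [Fintype β] [DecidableEq β] (p : Ω → ℝ) (X : Ω → α) (Y : Ω → β) : ℝ :=
  ent p X + ent p Y - ent p (fun ω => (X ω, Y ω))

/-- Conditional mutual information `I(X;Y|Z)`. -/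
def cmi {Ω : Type*} [Fintype Ω] {α β γ : Type*} [Fintype α] [DecidableEq α]
    [Fintype β] [DecidableEq β] [Fintype γ] [DecidableEq γ]
    (p : Ω → ℝ) (X : Ω → α) (Y : Ω → β) (Z : Ω → γ) : ℝ :=
  ent p (fun ω => (X ω, Z ω)) + ent p (fun ω => (Y ω, Z ω))
    - ent p (fun ω => (X ω, Y ω, Z ω)) - ent p Z

/-- Residual information `RI(A;B)`: the infimum of `I(A;B | f(A))` over all pairs of
functions `(f,g)` such that `f(A) = g(B)` almost surely. -/
def RI {Ω : Type*} [Fintype Ω] {α β : Type*} [Fintype α] [DecidableEq α]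
    [Fintype β] [DecidableEq β] (p : Ω → ℝ) (A : Ω → α) (B : Ω → β) : ℝ :=
  sInf {r : ℝ | ∃ (f : α → α) (g : β → α),
    (∀ ω, p ω ≠ 0 → f (A ω) = g (B ω)) ∧ r = cmi p A B (fun ω => f (A ω))}

/-!
`H(M₂₃) ≥ H(M₂₃ | M₃₁) = I(M₂₃; M₁₂ | M₃₁) + H(M₂₃ | M₁₂, M₃₁)`, and the two terms are bounded
separately.

Together with Alice's view `(M₁₂, M₃₁)`, the message `M₂₃` determines `(Y, Z)`, while Alice's view
tells nothing about `(Y, Z)` beyond `X`; hence `H(M₂₃ | M₁₂, M₃₁) ≥ H(Y, Z | X)`.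

Since `X` is a function of `(M₁₂, M₃₁)` and `Z` of `(M₂₃, M₃₁)`, data processing gives
`I(M₂₃; M₁₂ | M₃₁) ≥ I(X; Z | M₃₁)`. The two privacy conditions make `M₃₁ – X – Z` and
`M₃₁ – Z – X` Markov chains, so the conditional law of `M₃₁` given `X = x` only depends on the
connected component of `x` in the support graph of `(X, Z)` (double Markov property). That
component is the Gács–Körner common part `Q = f(X) = g(Z)`, so `I(M₃₁; X | Q) = 0`, and then
`I(X; Z | M₃₁) ≥ I(X; Z | Q) ≥ RI(X; Z)` (Wolf–Wullschleger).
-/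

open Finset Real InformationTheory

section Mass

variable {Ω α β γ : Type*} [Fintype Ω] [DecidableEq α] [DecidableEq β] [DecidableEq γ]
  {p : Ω → ℝ}

theorem prob_nonneg (hp : ∀ ω, 0 ≤ p ω) (W : Ω → α) (a : α) : 0 ≤ prob p W a :=
  sum_nonneg fun ω _ => by split_ifs <;> simp [hp ω]

theorem le_prob_apply (hp : ∀ ω, 0 ≤ p ω) (W : Ω → α) (ω : Ω) : p ω ≤ prob p W (W ω) := by
  simpa [prob] using single_le_sum (f := fun ω' => if W ω' = W ω then p ω' else 0)
    (fun ω' _ => by split_ifs <;> simp [hp ω']) (mem_univ ω)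

theorem prob_le_prob_comp (hp : ∀ ω, 0 ≤ p ω) (W : Ω → α) (f : α → β) (a : α) :
    prob p W a ≤ prob p (fun ω => f (W ω)) (f a) :=
  sum_le_sum fun ω _ => by split_ifs with h h' <;> simp_all [hp ω]

theorem sum_prob_mul [Fintype α] (W : Ω → α) (g : α → ℝ) :
    ∑ a, prob p W a * g a = ∑ ω, p ω * g (W ω) := by
  simp only [prob, sum_mul, ite_mul, zero_mul]
  rw [sum_comm]
  simp

theorem sum_prob [Fintype α] (W : Ω → α) : ∑ a, prob p W a = ∑ ω, p ω := by
  simpa using sum_prob_mul W (fun _ => 1)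

theorem sum_prob_pair [Fintype α] (A : Ω → α) (C : Ω → β) (c : β) :
    ∑ a, prob p (fun ω => (A ω, C ω)) (a, c) = prob p C c := by
  simp only [prob, Prod.mk.injEq, ite_and]
  rw [sum_comm]
  simp

theorem prob_comp [Fintype α] (W : Ω → α) (g : α → β) (b : β) :
    prob p (fun ω => g (W ω)) b = ∑ a, if g a = b then prob p W a else 0 := by
  have h := sum_prob_mul (p := p) W (fun a => if g a = b then 1 else 0)
  simp only [mul_ite, mul_one, mul_zero] at h
  rw [h, prob]

theorem prob_comp_of_injective (W : Ω → α) {e : α → β} (he : Function.Injective e) (a : α) :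
    prob p (fun ω => e (W ω)) (e a) = prob p W a := by
  simp only [prob, he.eq_iff]

theorem prob_apply_eq_of_comp {W : Ω → α} {W' : Ω → β} (f : α → β) (g : β → α)
    (hf : ∀ ω, W' ω = f (W ω)) (hg : ∀ ω, W ω = g (W' ω)) (ω : Ω) :
    prob p W' (W' ω) = prob p W (W ω) := by
  refine sum_congr rfl fun ω' _ => if_congr ⟨fun h => ?_, fun h => ?_⟩ rfl rfl
  · rw [hg ω', hg ω, h]
  · rw [hf ω', hf ω, h]

/-- `p(a, c) p(b, c) / p(c)`: the law under which `A` and `B` are conditionally independent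
given `C`, with the same pair marginals; `cmi p A B C` is the divergence from it. Where
`p(c) = 0` it is `0` by the convention `x / 0 = 0`. -/
def condIndepMass (p : Ω → ℝ) (A : Ω → α) (B : Ω → β) (C : Ω → γ)
    (t : α × β × γ) : ℝ :=
  prob p (fun ω => (A ω, C ω)) (t.1, t.2.2) * prob p (fun ω => (B ω, C ω)) t.2 / prob p C t.2.2

theorem condIndepMass_nonneg (hp : ∀ ω, 0 ≤ p ω) (A : Ω → α) (B : Ω → β) (C : Ω → γ)
    (t : α × β × γ) : 0 ≤ condIndepMass p A B C t :=
  div_nonneg (mul_nonneg (prob_nonneg hp _ _) (prob_nonneg hp _ _)) (prob_nonneg hp _ _)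

theorem prob_eq_zero_of_condIndepMass_eq_zero (hp : ∀ ω, 0 ≤ p ω) (A : Ω → α) (B : Ω → β)
    (C : Ω → γ) (t : α × β × γ) (h : condIndepMass p A B C t = 0) :
    prob p (fun ω => (A ω, B ω, C ω)) t = 0 := by
  by_contra hP
  have hP := (prob_nonneg hp _ t).lt_of_ne' hP
  have hAC : prob p _ t ≤ prob p (fun ω => (A ω, C ω)) (t.1, t.2.2) :=
    prob_le_prob_comp hp (fun ω => (A ω, B ω, C ω)) (fun t => (t.1, t.2.2)) t
  have hBC : prob p _ t ≤ prob p (fun ω => (B ω, C ω)) t.2 :=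
    prob_le_prob_comp hp (fun ω => (A ω, B ω, C ω)) Prod.snd t
  have hC : prob p _ t ≤ prob p C t.2.2 :=
    prob_le_prob_comp hp (fun ω => (A ω, B ω, C ω)) (fun t => t.2.2) t
  exact (div_pos (mul_pos (hP.trans_le hAC) (hP.trans_le hBC)) (hP.trans_le hC)).ne' h

theorem prob_eq_condIndepMass_iff (hp : ∀ ω, 0 ≤ p ω) (A : Ω → α) (B : Ω → β) (C : Ω → γ)
    (a : α) (b : β) (c : γ) :
    prob p (fun ω => (A ω, B ω, C ω)) (a, b, c) = condIndepMass p A B C (a, b, c) ↔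
      prob p (fun ω => (A ω, B ω, C ω)) (a, b, c) * prob p C c =
        prob p (fun ω => (A ω, C ω)) (a, c) * prob p (fun ω => (B ω, C ω)) (b, c) := by
  rcases eq_or_ne (prob p C c) 0 with hc | hc
  · have hT : prob p _ (a, b, c) ≤ prob p C c :=
      prob_le_prob_comp hp (fun ω => (A ω, B ω, C ω)) (fun t => t.2.2) (a, b, c)
    have hAC : prob p _ (a, c) ≤ prob p C c :=
      prob_le_prob_comp hp (fun ω => (A ω, C ω)) Prod.snd (a, c)
    simp [condIndepMass, hc, le_antisymm (hc ▸ hT) (prob_nonneg hp _ _),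
      le_antisymm (hc ▸ hAC) (prob_nonneg hp _ _)]
  · rw [condIndepMass, eq_div_iff hc]

end Mass

section Entropy

variable {Ω α β : Type*} [Fintype Ω] [Fintype α] [DecidableEq α] [Fintype β] [DecidableEq β]
  {p : Ω → ℝ}

theorem ent_eq_neg_sum (W : Ω → α) : ent p W = -∑ ω, p ω * logb 2 (prob p W (W ω)) := by
  rw [ent, sum_prob_mul W]

theorem ent_eq_of_comp {W : Ω → α} {W' : Ω → β} (f : α → β) (g : β → α)
    (hf : ∀ ω, W' ω = f (W ω)) (hg : ∀ ω, W ω = g (W' ω)) : ent p W' = ent p W := by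
  simp only [ent_eq_neg_sum, prob_apply_eq_of_comp f g hf hg]

theorem ent_comp_le (hp : ∀ ω, 0 ≤ p ω) (W : Ω → α) (f : α → β) :
    ent p (fun ω => f (W ω)) ≤ ent p W := by
  rw [ent_eq_neg_sum, ent_eq_neg_sum, neg_le_neg_iff]
  refine sum_le_sum fun ω _ => ?_
  rcases (hp ω).eq_or_lt with hω | hω
  · simp [← hω]
  · exact mul_le_mul_of_nonneg_left (logb_le_logb_of_le one_lt_two
      (hω.trans_le (le_prob_apply hp W ω)) (prob_le_prob_comp hp W f (W ω))) hω.le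

theorem ent_const (hsum : ∑ ω, p ω = 1) (a : α) : ent p (fun _ => a) = 0 := by
  simp [ent, prob, hsum]

end Entropy

theorem mul_log_div_eq_mul_klFun_add_sub {x y : ℝ} (hxy : y = 0 → x = 0) :
    x * log (x / y) = y * klFun (x / y) + x - y := by
  rcases eq_or_ne y 0 with rfl | hy
  · simp [hxy rfl]
  · rw [klFun]
    field_simp
    ring

theorem mul_klFun_div_nonneg {x y : ℝ} (hx : 0 ≤ x) (hy : 0 ≤ y) : 0 ≤ y * klFun (x / y) :=
  mul_nonneg hy (klFun_nonneg (div_nonneg hx hy))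

theorem mul_klFun_div_eq_zero_iff {x y : ℝ} (hx : 0 ≤ x) (hy : 0 ≤ y) (hxy : y = 0 → x = 0) :
    y * klFun (x / y) = 0 ↔ x = y := by
  rcases eq_or_ne y 0 with rfl | hy'
  · simp [hxy rfl]
  · rw [mul_eq_zero, klFun_eq_zero_iff (div_nonneg hx hy), div_eq_one_iff_eq hy']
    simp [hy']

theorem sum_mul_log_div_eq_sum_mul_klFun {ι : Type*} (s : Finset ι) {P Q : ι → ℝ}
    (hPQ : ∑ i ∈ s, P i = ∑ i ∈ s, Q i) (h : ∀ i, Q i = 0 → P i = 0) :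
    ∑ i ∈ s, P i * log (P i / Q i) = ∑ i ∈ s, Q i * klFun (P i / Q i) := by
  simp only [mul_log_div_eq_mul_klFun_add_sub (h _), sum_sub_distrib, sum_add_distrib, hPQ]
  ring

section CondMutualInfo

variable {Ω α β γ : Type*} [Fintype Ω] [Fintype α] [DecidableEq α] [Fintype β] [DecidableEq β]
  [Fintype γ] [DecidableEq γ] {p : Ω → ℝ}

theorem sum_condIndepMass (A : Ω → α) (B : Ω → β) (C : Ω → γ) :
    ∑ t, condIndepMass p A B C t = ∑ ω, p ω := by
  calc ∑ t, condIndepMass p A B C t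
      = ∑ c, (∑ a, prob p (fun ω => (A ω, C ω)) (a, c)) *
          (∑ b, prob p (fun ω => (B ω, C ω)) (b, c)) / prob p C c := by
        simp only [condIndepMass, Fintype.sum_prod_type, sum_mul_sum, sum_div]
        exact (sum_congr rfl fun _ _ => sum_comm).trans sum_comm
    _ = ∑ ω, p ω := by
        simp only [sum_prob_pair, mul_self_div_self, sum_prob]

theorem cmi_eq_sum_mul_logb (hp : ∀ ω, 0 ≤ p ω) (A : Ω → α) (B : Ω → β) (C : Ω → γ) :
    cmi p A B C = ∑ t, prob p (fun ω => (A ω, B ω, C ω)) t *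
      logb 2 (prob p (fun ω => (A ω, B ω, C ω)) t / condIndepMass p A B C t) := by
  rw [sum_prob_mul]
  have key : ∀ ω, p ω * logb 2 (prob p (fun ω => (A ω, B ω, C ω)) (A ω, B ω, C ω) /
      condIndepMass p A B C (A ω, B ω, C ω)) =
      p ω * logb 2 (prob p (fun ω => (A ω, B ω, C ω)) (A ω, B ω, C ω))
        + p ω * logb 2 (prob p C (C ω)) - p ω * logb 2 (prob p (fun ω => (A ω, C ω)) (A ω, C ω))
        - p ω * logb 2 (prob p (fun ω => (B ω, C ω)) (B ω, C ω)) := by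
    intro ω
    rcases (hp ω).eq_or_lt with hω | hω
    · simp [← hω]
    have hT := (hω.trans_le (le_prob_apply hp (fun ω => (A ω, B ω, C ω)) ω)).ne'
    have hAC := (hω.trans_le (le_prob_apply hp (fun ω => (A ω, C ω)) ω)).ne'
    have hBC := (hω.trans_le (le_prob_apply hp (fun ω => (B ω, C ω)) ω)).ne'
    have hC := (hω.trans_le (le_prob_apply hp C ω)).ne'
    simp only [condIndepMass]
    rw [logb_div hT (div_ne_zero (mul_ne_zero hAC hBC) hC), logb_div (mul_ne_zero hAC hBC) hC,
      logb_mul hAC hBC]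
    ring
  simp only [key, sum_sub_distrib, sum_add_distrib, cmi, ent_eq_neg_sum]
  ring

theorem cmi_mul_log_two (hp : ∀ ω, 0 ≤ p ω) (A : Ω → α) (B : Ω → β) (C : Ω → γ) :
    cmi p A B C * log 2 = ∑ t, condIndepMass p A B C t *
      klFun (prob p (fun ω => (A ω, B ω, C ω)) t / condIndepMass p A B C t) := by
  rw [cmi_eq_sum_mul_logb hp, sum_mul, ← sum_mul_log_div_eq_sum_mul_klFun _
    (by rw [sum_prob, sum_condIndepMass]) (prob_eq_zero_of_condIndepMass_eq_zero hp A B C)]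
  simp only [logb, mul_assoc, div_mul_cancel₀ _ (log_pos one_lt_two).ne']

theorem cmi_nonneg (hp : ∀ ω, 0 ≤ p ω) (A : Ω → α) (B : Ω → β) (C : Ω → γ) :
    0 ≤ cmi p A B C := by
  refine nonneg_of_mul_nonneg_left ?_ (log_pos one_lt_two)
  rw [cmi_mul_log_two hp]
  exact sum_nonneg fun t _ =>
    mul_klFun_div_nonneg (prob_nonneg hp _ t) (condIndepMass_nonneg hp A B C t)

theorem cmi_eq_zero_iff_prob_eq_condIndepMass (hp : ∀ ω, 0 ≤ p ω) (A : Ω → α) (B : Ω → β)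
    (C : Ω → γ) :
    cmi p A B C = 0 ↔ ∀ t, prob p (fun ω => (A ω, B ω, C ω)) t = condIndepMass p A B C t := by
  rw [← mul_eq_zero_iff_right (log_pos one_lt_two).ne', cmi_mul_log_two hp,
    sum_eq_zero_iff_of_nonneg fun t _ =>
      mul_klFun_div_nonneg (prob_nonneg hp _ t) (condIndepMass_nonneg hp A B C t)]
  simp only [mem_univ, true_implies, mul_klFun_div_eq_zero_iff (prob_nonneg hp _ _)
    (condIndepMass_nonneg hp A B C _) (prob_eq_zero_of_condIndepMass_eq_zero hp A B C _)]

theorem cmi_eq_zero_iff (hp : ∀ ω, 0 ≤ p ω) (A : Ω → α) (B : Ω → β) (C : Ω → γ) :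
    cmi p A B C = 0 ↔ ∀ a b c, prob p (fun ω => (A ω, B ω, C ω)) (a, b, c) * prob p C c =
      prob p (fun ω => (A ω, C ω)) (a, c) * prob p (fun ω => (B ω, C ω)) (b, c) := by
  simp only [cmi_eq_zero_iff_prob_eq_condIndepMass hp, Prod.forall, prob_eq_condIndepMass_iff hp]

end CondMutualInfo

section Shannon

variable {Ω α β γ δ ε : Type*} [Fintype Ω] [Fintype α] [DecidableEq α] [Fintype β]
  [DecidableEq β] [Fintype γ] [DecidableEq γ] [Fintype δ] [DecidableEq δ] [Fintype ε]
  [DecidableEq ε] {p : Ω → ℝ}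

theorem cmi_comm (A : Ω → α) (B : Ω → β) (C : Ω → γ) : cmi p A B C = cmi p B A C := by
  have h : ent p (fun ω => (B ω, A ω, C ω)) = ent p (fun ω => (A ω, B ω, C ω)) :=
    ent_eq_of_comp (fun t => (t.2.1, t.1, t.2.2)) (fun t => (t.2.1, t.1, t.2.2))
      (fun _ => rfl) (fun _ => rfl)
  rw [cmi, cmi, h]
  ring

theorem cmi_eq_condEnt_sub (A : Ω → α) (B : Ω → β) (C : Ω → γ) :
    cmi p A B C = condEnt p A C - condEnt p A (fun ω => (B ω, C ω)) := by
  rw [cmi, condEnt, condEnt]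
  ring

theorem cmi_self (A : Ω → α) (C : Ω → γ) : cmi p A A C = condEnt p A C := by
  have h : ent p (fun ω => (A ω, A ω, C ω)) = ent p (fun ω => (A ω, C ω)) :=
    ent_eq_of_comp (fun t => (t.1, t.1, t.2)) (fun t => (t.1, t.2.2)) (fun _ => rfl) (fun _ => rfl)
  rw [cmi, h, condEnt]
  ring

theorem condEnt_nonneg (hp : ∀ ω, 0 ≤ p ω) (A : Ω → α) (C : Ω → γ) : 0 ≤ condEnt p A C :=
  cmi_self (p := p) A C ▸ cmi_nonneg hp A A C

theorem cmi_le_condEnt (hp : ∀ ω, 0 ≤ p ω) (A : Ω → α) (B : Ω → β) (C : Ω → γ) :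
    cmi p A B C ≤ condEnt p A C := by
  linarith [cmi_eq_condEnt_sub (p := p) A B C, condEnt_nonneg hp A (fun ω => (B ω, C ω))]

theorem condEnt_le_condEnt_comp (hp : ∀ ω, 0 ≤ p ω) (A : Ω → α) (C : Ω → γ) (g : γ → δ) :
    condEnt p A C ≤ condEnt p A (fun ω => g (C ω)) := by
  have hC : ent p (fun ω => (C ω, g (C ω))) = ent p C :=
    ent_eq_of_comp (fun c => (c, g c)) Prod.fst (fun _ => rfl) (fun _ => rfl)
  have hAC : ent p (fun ω => (A ω, C ω, g (C ω))) = ent p (fun ω => (A ω, C ω)) :=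
    ent_eq_of_comp (fun t => (t.1, t.2, g t.2)) (fun t => (t.1, t.2.1)) (fun _ => rfl)
      (fun _ => rfl)
  have h := cmi_nonneg hp A C (fun ω => g (C ω))
  rw [cmi, hC, hAC] at h
  rw [condEnt, condEnt]
  linarith

theorem condEnt_le_ent (hp : ∀ ω, 0 ≤ p ω) (hsum : ∑ ω, p ω = 1) (A : Ω → α) (C : Ω → γ) :
    condEnt p A C ≤ ent p A := by
  have hA : ent p (fun ω => (A ω, ())) = ent p A :=
    ent_eq_of_comp (fun a => (a, ())) Prod.fst (fun _ => rfl) (fun _ => rfl)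
  have h := condEnt_le_condEnt_comp hp A C (fun _ => ())
  unfold condEnt at h
  rwa [hA, ent_const hsum (), sub_zero] at h

theorem condEnt_pair_le (hp : ∀ ω, 0 ≤ p ω) (A : Ω → α) (B : Ω → β) (C : Ω → γ) :
    condEnt p (fun ω => (A ω, B ω)) C ≤ condEnt p A C + condEnt p B C := by
  have h : ent p (fun ω => ((A ω, B ω), C ω)) = ent p (fun ω => (A ω, B ω, C ω)) :=
    ent_eq_of_comp (fun t => ((t.1, t.2.1), t.2.2)) (fun t => (t.1.1, t.1.2, t.2))
      (fun _ => rfl) (fun _ => rfl)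
  have := cmi_nonneg hp A B C
  rw [cmi] at this
  rw [condEnt, condEnt, condEnt, h]
  linarith

theorem cmi_pair_right (A : Ω → α) (B₁ : Ω → β) (B₂ : Ω → δ) (C : Ω → γ) :
    cmi p A (fun ω => (B₁ ω, B₂ ω)) C = cmi p A B₂ C + cmi p A B₁ (fun ω => (B₂ ω, C ω)) := by
  have hB : ent p (fun ω => ((B₁ ω, B₂ ω), C ω)) = ent p (fun ω => (B₁ ω, B₂ ω, C ω)) :=
    ent_eq_of_comp (fun t => ((t.1, t.2.1), t.2.2)) (fun t => (t.1.1, t.1.2, t.2))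
      (fun _ => rfl) (fun _ => rfl)
  have hAB : ent p (fun ω => (A ω, (B₁ ω, B₂ ω), C ω)) = ent p (fun ω => (A ω, B₁ ω, B₂ ω, C ω)) :=
    ent_eq_of_comp (fun t => (t.1, (t.2.1, t.2.2.1), t.2.2.2))
      (fun t => (t.1, t.2.1.1, t.2.1.2, t.2.2)) (fun _ => rfl) (fun _ => rfl)
  rw [cmi, cmi, cmi, hB, hAB]
  ring

theorem cmi_le_of_condEnt_eq_zero (hp : ∀ ω, 0 ≤ p ω) (A : Ω → α) {B : Ω → β} {B' : Ω → δ}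
    (C : Ω → γ) (h : condEnt p B' (fun ω => (B ω, C ω)) = 0) : cmi p A B' C ≤ cmi p A B C := by
  -- the gap is `I(A; B | B', C) + H(A, B, B', C) - H(A, B, C)` once `H(B, B', C) = H(B, C)`
  have hB : ent p (fun ω => (B ω, B' ω, C ω)) = ent p (fun ω => (B' ω, B ω, C ω)) :=
    ent_eq_of_comp (fun t => (t.2.1, t.1, t.2.2)) (fun t => (t.2.1, t.1, t.2.2))
      (fun _ => rfl) (fun _ => rfl)
  have hAB : ent p (fun ω => (A ω, B ω, C ω)) ≤ ent p (fun ω => (A ω, B ω, B' ω, C ω)) :=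
    ent_comp_le hp (fun ω => (A ω, B ω, B' ω, C ω)) (fun t => (t.1, t.2.1, t.2.2.2))
  have := cmi_nonneg hp A B (fun ω => (B' ω, C ω))
  rw [condEnt] at h
  rw [cmi] at this
  rw [cmi, cmi]
  linarith

theorem cmi_comp_le (hp : ∀ ω, 0 ≤ p ω) (A : Ω → α) (B : Ω → β) (C : Ω → γ) (g : β → δ) :
    cmi p A (fun ω => g (B ω)) C ≤ cmi p A B C := by
  refine cmi_le_of_condEnt_eq_zero hp A C ?_
  have h : ent p (fun ω => (g (B ω), B ω, C ω)) = ent p (fun ω => (B ω, C ω)) :=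
    ent_eq_of_comp (fun t => (g t.1, t)) Prod.snd (fun _ => rfl) (fun _ => rfl)
  rw [condEnt, h, sub_self]

theorem cmi_cond_comp_le (hp : ∀ ω, 0 ≤ p ω) (A : Ω → α) (B : Ω → β) (C : Ω → γ) (f : α → δ) :
    cmi p A B (fun ω => (C ω, f (A ω))) ≤ cmi p A B C := by
  -- the gap is `I(B; f A | C)`
  have hA : ent p (fun ω => (A ω, C ω, f (A ω))) = ent p (fun ω => (A ω, C ω)) :=
    ent_eq_of_comp (fun t => (t.1, t.2, f t.1)) (fun t => (t.1, t.2.1)) (fun _ => rfl)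
      (fun _ => rfl)
  have hB : ent p (fun ω => (B ω, C ω, f (A ω))) = ent p (fun ω => (B ω, f (A ω), C ω)) :=
    ent_eq_of_comp (fun t => (t.1, t.2.2, t.2.1)) (fun t => (t.1, t.2.2, t.2.1)) (fun _ => rfl)
      (fun _ => rfl)
  have hAB : ent p (fun ω => (A ω, B ω, C ω, f (A ω))) = ent p (fun ω => (A ω, B ω, C ω)) :=
    ent_eq_of_comp (fun t => (t.1, t.2.1, t.2.2, f t.1)) (fun t => (t.1, t.2.1, t.2.2.1))
      (fun _ => rfl) (fun _ => rfl)
  have hC : ent p (fun ω => (C ω, f (A ω))) = ent p (fun ω => (f (A ω), C ω)) :=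
    ent_eq_of_comp Prod.swap Prod.swap (fun _ => rfl) (fun _ => rfl)
  have := cmi_nonneg hp B (fun ω => f (A ω)) C
  rw [cmi] at this
  rw [cmi, cmi, hA, hB, hAB, hC]
  linarith

theorem cmi_comp_comp_eq_zero (hp : ∀ ω, 0 ≤ p ω) {A : Ω → α} {B : Ω → β} {C : Ω → γ}
    (h : cmi p A B C = 0) (f : α → δ) (g : β → ε) :
    cmi p (fun ω => f (A ω)) (fun ω => g (B ω)) C = 0 := by
  refine le_antisymm ?_ (cmi_nonneg hp _ _ _)
  calc cmi p (fun ω => f (A ω)) (fun ω => g (B ω)) C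
      ≤ cmi p (fun ω => f (A ω)) B C := cmi_comp_le hp _ B C g
    _ = cmi p B (fun ω => f (A ω)) C := cmi_comm _ _ _
    _ ≤ cmi p B A C := cmi_comp_le hp B A C f
    _ = 0 := by rw [cmi_comm, h]

theorem condEnt_eq_zero_of_comp (hp : ∀ ω, 0 ≤ p ω) {A : Ω → α} (C : Ω → γ) (g : γ → δ)
    (h : condEnt p A (fun ω => g (C ω)) = 0) : condEnt p A C = 0 :=
  le_antisymm (h ▸ condEnt_le_condEnt_comp hp A C g) (condEnt_nonneg hp A C)

theorem condEnt_pair_eq_zero (hp : ∀ ω, 0 ≤ p ω) {A : Ω → α} {B : Ω → β} {C : Ω → γ}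
    (hA : condEnt p A C = 0) (hB : condEnt p B C = 0) :
    condEnt p (fun ω => (A ω, B ω)) C = 0 :=
  le_antisymm ((condEnt_pair_le hp A B C).trans_eq (by rw [hA, hB, add_zero]))
    (condEnt_nonneg hp _ C)

theorem condEnt_le_condEnt_of_condEnt_eq_zero (hp : ∀ ω, 0 ≤ p ω) {S : Ω → α} {X : Ω → β}
    {M : Ω → γ} {B : Ω → δ} (hdet : condEnt p S (fun ω => (B ω, M ω)) = 0)
    (hpriv : cmi p M S X = 0) : condEnt p S X ≤ condEnt p B M :=
  calc condEnt p S X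
      = condEnt p S (fun ω => (M ω, X ω)) := by
        linarith [cmi_eq_condEnt_sub (p := p) S M X, cmi_comm (p := p) M S X]
    _ ≤ condEnt p S M := condEnt_le_condEnt_comp hp S _ Prod.fst
    _ = cmi p S B M := by linarith [cmi_eq_condEnt_sub (p := p) S B M]
    _ = cmi p B S M := cmi_comm S B M
    _ ≤ condEnt p B M := cmi_le_condEnt hp B S M

end Shannon

section CommonPart

variable {Ω α γ : Type*} [Fintype Ω] [DecidableEq α] [DecidableEq γ] {p : Ω → ℝ}

def Linked (p : Ω → ℝ) (X : Ω → α) (Z : Ω → γ) (x x' : α) : Prop :=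
  ∃ z, prob p (fun ω => (X ω, Z ω)) (x, z) ≠ 0 ∧ prob p (fun ω => (X ω, Z ω)) (x', z) ≠ 0

/-- The Gács–Körner common part of `X` and `Z`, realised on `α`: a representative of the
connected component of `x` for `Linked`. -/
def commonPart (p : Ω → ℝ) (X : Ω → α) (Z : Ω → γ) (x : α) : α :=
  (⟦x⟧ : Quotient (Relation.EqvGen.setoid (Linked p X Z))).out

theorem eqvGen_commonPart (X : Ω → α) (Z : Ω → γ) (x : α) :
    Relation.EqvGen (Linked p X Z) x (commonPart p X Z x) :=
  (Quotient.mk_out (s := Relation.EqvGen.setoid (Linked p X Z)) x).symm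

theorem commonPart_eq_of_linked {X : Ω → α} {Z : Ω → γ} {x x' : α} (h : Linked p X Z x x') :
    commonPart p X Z x = commonPart p X Z x' :=
  congrArg Quotient.out (Quotient.sound (Relation.EqvGen.rel _ _ h))

theorem exists_commonPart_eq_comp [Nonempty α] (hp : ∀ ω, 0 ≤ p ω) (X : Ω → α) (Z : Ω → γ) :
    ∃ g : γ → α, ∀ ω, p ω ≠ 0 → commonPart p X Z (X ω) = g (Z ω) := by
  refine ⟨fun z => commonPart p X Z
    (Classical.epsilon fun x => prob p (fun ω => (X ω, Z ω)) (x, z) ≠ 0), fun ω hω => ?_⟩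
  have hXZ : prob p (fun ω => (X ω, Z ω)) (X ω, Z ω) ≠ 0 :=
    (((hp ω).lt_of_ne' hω).trans_le (le_prob_apply hp (fun ω => (X ω, Z ω)) ω)).ne'
  exact commonPart_eq_of_linked ⟨Z ω, hXZ,
    Classical.epsilon_spec (p := fun x => prob p (fun ω => (X ω, Z ω)) (x, Z ω) ≠ 0) ⟨X ω, hXZ⟩⟩

end CommonPart

section DoubleMarkov

variable {Ω α γ δ ρ : Type*} [Fintype Ω] [Fintype α] [DecidableEq α] [Fintype γ] [DecidableEq γ]
  [Fintype δ] [DecidableEq δ] [Fintype ρ] [DecidableEq ρ] {p : Ω → ℝ}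

theorem cmi_comp_eq_zero_of_prob_eq_mul (hp : ∀ ω, 0 ≤ p ω) (V : Ω → ρ) (X : Ω → α) (f : α → δ)
    (κ : δ → ρ → ℝ) (h : ∀ v x, prob p (fun ω => (V ω, X ω)) (v, x) = κ (f x) v * prob p X x) :
    cmi p V X (fun ω => f (X ω)) = 0 := by
  rw [cmi_eq_zero_iff hp]
  intro v x c
  have hT : prob p (fun ω => (V ω, X ω, f (X ω))) (v, x, c) =
      if f x = c then prob p (fun ω => (V ω, X ω)) (v, x) else 0 := by
    rw [prob_comp (fun ω => (V ω, X ω)) (fun t => (t.1, t.2, f t.2))]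
    simp [Fintype.sum_prod_type, ite_and]
  have hX : prob p (fun ω => (X ω, f (X ω))) (x, c) = if f x = c then prob p X x else 0 := by
    rw [prob_comp X (fun x => (x, f x))]
    simp [ite_and]
  have hV : prob p (fun ω => (V ω, f (X ω))) (v, c) = κ c v * prob p (fun ω => f (X ω)) c := by
    rw [prob_comp (fun ω => (V ω, X ω)) (fun t => (t.1, f t.2)), prob_comp X f]
    simp only [Fintype.sum_prod_type_right, Prod.mk.injEq, ite_and, sum_ite_eq', mem_univ,
      if_true, mul_sum, mul_ite, mul_zero]
    exact sum_congr rfl fun x' _ => by split_ifs with hx' <;> simp [h, hx']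
  rw [hT, hX, hV]
  split_ifs with hc
  · rw [h, hc]
    ring
  · simp

theorem prob_div_prob_eq_of_cmi_eq_zero (hp : ∀ ω, 0 ≤ p ω) {V : Ω → ρ} {X : Ω → α} {Z : Ω → γ}
    (h₁ : cmi p V Z X = 0) (h₂ : cmi p V X Z = 0) {x : α} {z : γ}
    (hxz : prob p (fun ω => (X ω, Z ω)) (x, z) ≠ 0) (v : ρ) :
    prob p (fun ω => (V ω, X ω)) (v, x) / prob p X x =
      prob p (fun ω => (V ω, Z ω)) (v, z) / prob p Z z := by
  have e₁ := (cmi_eq_zero_iff hp V Z X).1 h₁ v z x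
  have e₂ := (cmi_eq_zero_iff hp V X Z).1 h₂ v x z
  have hVZX : prob p (fun ω => (V ω, Z ω, X ω)) (v, z, x) =
      prob p (fun ω => (V ω, X ω, Z ω)) (v, x, z) :=
    prob_comp_of_injective (fun ω => (V ω, X ω, Z ω)) (e := fun t => (t.1, t.2.2, t.2.1))
      (by rintro ⟨_, _, _⟩ ⟨_, _, _⟩ h; simp_all) (v, x, z)
  have hZX : prob p (fun ω => (Z ω, X ω)) (z, x) = prob p (fun ω => (X ω, Z ω)) (x, z) :=
    prob_comp_of_injective (fun ω => (X ω, Z ω)) Prod.swap_injective (x, z)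
  have hX : prob p X x ≠ 0 := fun h0 => hxz <| le_antisymm
    (h0 ▸ prob_le_prob_comp hp (fun ω => (X ω, Z ω)) Prod.fst (x, z)) (prob_nonneg hp _ _)
  have hZ : prob p Z z ≠ 0 := fun h0 => hxz <| le_antisymm
    (h0 ▸ prob_le_prob_comp hp (fun ω => (X ω, Z ω)) Prod.snd (x, z)) (prob_nonneg hp _ _)
  rw [hVZX, hZX] at e₁
  rw [div_eq_div_iff hX hZ]
  refine mul_left_cancel₀ hxz ?_
  linear_combination prob p X x * e₂ - prob p Z z * e₁

theorem cmi_commonPart_eq_zero (hp : ∀ ω, 0 ≤ p ω) {V : Ω → ρ} {X : Ω → α} {Z : Ω → γ}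
    (h₁ : cmi p V Z X = 0) (h₂ : cmi p V X Z = 0) :
    cmi p V X (fun ω => commonPart p X Z (X ω)) = 0 := by
  set r : α → ρ → ℝ := fun x v => prob p (fun ω => (V ω, X ω)) (v, x) / prob p X x
  have hlinked : ∀ x x', Linked p X Z x x' → r x = r x' := by
    rintro x x' ⟨z, hxz, hx'z⟩
    funext v
    exact (prob_div_prob_eq_of_cmi_eq_zero hp h₁ h₂ hxz v).trans
      (prob_div_prob_eq_of_cmi_eq_zero hp h₁ h₂ hx'z v).symm
  have hclass : ∀ x, r x = r (commonPart p X Z x) := fun x =>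
    Setoid.eqvGen_le (s := Setoid.ker r) hlinked (eqvGen_commonPart X Z x)
  refine cmi_comp_eq_zero_of_prob_eq_mul hp V X _ r fun v x => ?_
  rw [← hclass]
  rcases eq_or_ne (prob p X x) 0 with hx | hx
  · have hVX : prob p (fun ω => (V ω, X ω)) (v, x) ≤ prob p X x :=
      prob_le_prob_comp hp (fun ω => (V ω, X ω)) Prod.snd (v, x)
    simp [hx, le_antisymm (hx ▸ hVX) (prob_nonneg hp _ _)]
  · exact (div_mul_cancel₀ _ hx).symm

theorem cmi_commonPart_le (hp : ∀ ω, 0 ≤ p ω) {V : Ω → ρ} {X : Ω → α} {Z : Ω → γ}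
    (h₁ : cmi p V Z X = 0) (h₂ : cmi p V X Z = 0) :
    cmi p X Z (fun ω => commonPart p X Z (X ω)) ≤ cmi p X Z V := by
  set C := fun ω => commonPart p X Z (X ω)
  calc cmi p X Z C
      ≤ cmi p X (fun ω => (Z ω, V ω)) C := cmi_comp_le hp X (fun ω => (Z ω, V ω)) C Prod.fst
    _ = cmi p X V C + cmi p X Z (fun ω => (V ω, C ω)) := cmi_pair_right X Z V C
    _ = cmi p X Z (fun ω => (V ω, C ω)) := by
        rw [cmi_comm, cmi_commonPart_eq_zero hp h₁ h₂, zero_add]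
    _ ≤ cmi p X Z V := cmi_cond_comp_le hp X Z V (commonPart p X Z)

theorem RI_le_cmi_commonPart [Nonempty α] (hp : ∀ ω, 0 ≤ p ω) (X : Ω → α) (Z : Ω → γ) :
    RI p X Z ≤ cmi p X Z (fun ω => commonPart p X Z (X ω)) := by
  obtain ⟨g, hg⟩ := exists_commonPart_eq_comp hp X Z
  exact csInf_le ⟨0, by rintro r ⟨f, g, -, rfl⟩; exact cmi_nonneg hp _ _ _⟩ ⟨_, g, hg, rfl⟩

end DoubleMarkov

theorem stmt9 {Ω : Type*} [Fintype Ω] {α β γ μ ν ρ : Type*}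
    [Fintype α] [DecidableEq α] [Fintype β] [DecidableEq β] [Fintype γ] [DecidableEq γ]
    [Fintype μ] [DecidableEq μ] [Fintype ν] [DecidableEq ν] [Fintype ρ] [DecidableEq ρ]
    (p : Ω → ℝ) (hp : ∀ ω, 0 ≤ p ω) (hsum : ∑ ω, p ω = 1)
    (X : Ω → α) (Y : Ω → β) (Z : Ω → γ)
    (M12 : Ω → μ) (M23 : Ω → ν) (M31 : Ω → ρ)
    (hcorX : condEnt p X (fun ω => (M12 ω, M31 ω)) = 0)
    (hcorY : condEnt p Y (fun ω => (M12 ω, M23 ω)) = 0)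
    (hcorZ : condEnt p Z (fun ω => (M23 ω, M31 ω)) = 0)
    (hprivA : cmi p (fun ω => (M12 ω, M31 ω)) (fun ω => (Y ω, Z ω)) X = 0)
    (hprivC : cmi p (fun ω => (M23 ω, M31 ω)) (fun ω => (X ω, Y ω)) Z = 0) :
    ent p M23 ≥ RI p X Z + condEnt p (fun ω => (Y ω, Z ω)) X := by
  obtain ⟨ω₀⟩ : Nonempty Ω := by
    by_contra h
    simp [not_nonempty_iff.mp h] at hsum
  have : Nonempty α := ⟨X ω₀⟩
  have hZX : cmi p M31 Z X = 0 := cmi_comp_comp_eq_zero hp hprivA Prod.snd Prod.snd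
  have hXZ : cmi p M31 X Z = 0 := cmi_comp_comp_eq_zero hp hprivC Prod.snd Prod.fst
  have hXM23 : cmi p X Z M31 ≤ cmi p M23 M12 M31 :=
    calc cmi p X Z M31 ≤ cmi p X M23 M31 := cmi_le_of_condEnt_eq_zero hp X M31 hcorZ
      _ = cmi p M23 X M31 := cmi_comm X M23 M31
      _ ≤ cmi p M23 M12 M31 := cmi_le_of_condEnt_eq_zero hp M23 M31 hcorX
  set V := fun ω => (M23 ω, M12 ω, M31 ω)
  have hYZ : condEnt p (fun ω => (Y ω, Z ω)) V = 0 := condEnt_pair_eq_zero hp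
    (condEnt_eq_zero_of_comp hp V (fun v => (v.2.1, v.1)) hcorY)
    (condEnt_eq_zero_of_comp hp V (fun v => (v.1, v.2.2)) hcorZ)
  calc RI p X Z + condEnt p (fun ω => (Y ω, Z ω)) X
      ≤ cmi p X Z (fun ω => commonPart p X Z (X ω)) + condEnt p M23 (fun ω => (M12 ω, M31 ω)) :=
        add_le_add (RI_le_cmi_commonPart hp X Z)
          (condEnt_le_condEnt_of_condEnt_eq_zero hp hYZ hprivA)
    _ ≤ cmi p M23 M12 M31 + condEnt p M23 (fun ω => (M12 ω, M31 ω)) := by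
        grw [cmi_commonPart_le hp hZX hXZ, hXM23]
    _ = condEnt p M23 M31 := by
        rw [cmi_eq_condEnt_sub]
        ring
    _ ≤ ent p M23 := condEnt_le_ent hp hsum M23 M31
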